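/- arXiv:math/0612238 — 3 statements merged into one kernel-verified Lean document; each statement's English description precedes it below -/
import Mathlib

section
/- Let c > 0 and define the two-term asymptotic profile U_c : ℝ → ℝ by U_c(z) = 1/(1 + e^{z/c}) + (1/c²)· e^{z/c}/(1 + e^{z/c})² · log( 4 e^{z/c}/(1 + e^{z/c})² ). Then U_c(0) = 1/2 and U_c'(0) = −1/(4c) exactly; i.e. the slope of the asymptotic travelling-wave profile at its inflection point z = 0 is related to the wave speed by U'(0) = −1/(4c). -/
/-!
Write `E = e^{z/c}`. The leading term `1/(1+E)` has derivative `-E/(c(1+E)²)`, which is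
`-1/(4c)` at `z = 0`. The correction term is a function of `E/(1+E)²`, which is invariant under
`E ↦ 1/E`, i.e. under `z ↦ -z`; being even, it has derivative zero at `z = 0`.
-/

open Real

theorem Function.Even.deriv_zero {𝕜 F : Type*} [NontriviallyNormedField 𝕜] [NormedAddCommGroup F]
    [NormedSpace 𝕜 F] [IsAddTorsionFree F] {f : 𝕜 → F} (hf : f.Even) : deriv f 0 = 0 := by
  have h := deriv_comp_neg f (0 : 𝕜)
  rw [show (fun x => f (-x)) = f from funext hf, neg_zero] at h
  exact self_eq_neg.mp h

noncomputable def logisticDensity (x : ℝ) : ℝ := exp x / (1 + exp x) ^ 2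

lemma logisticDensity_pos (x : ℝ) : 0 < logisticDensity x := by
  unfold logisticDensity; positivity

lemma logisticDensity_zero : logisticDensity 0 = 1 / 4 := by
  norm_num [logisticDensity]

lemma logisticDensity_even : logisticDensity.Even := by
  intro x
  unfold logisticDensity
  rw [exp_neg]
  field_simp
  ring

lemma differentiable_logisticDensity : Differentiable ℝ logisticDensity :=
  Differentiable.div (by fun_prop) (by fun_prop) fun x => by positivity

lemma hasDerivAt_one_div_one_add_exp (x : ℝ) :
    HasDerivAt (fun x => 1 / (1 + exp x)) (-logisticDensity x) x := by
  refine ((hasDerivAt_const x (1 : ℝ)).fun_div ((hasDerivAt_exp x).const_add 1)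
    (by positivity)).congr_deriv ?_
  unfold logisticDensity; ring

theorem stmt_8_general (c : ℝ) (U : ℝ → ℝ)
    (hU : ∀ z : ℝ, U z =
      1 / (1 + Real.exp (z / c)) +
        (1 / c ^ 2) * (Real.exp (z / c) / (1 + Real.exp (z / c)) ^ 2) *
          Real.log (4 * Real.exp (z / c) / (1 + Real.exp (z / c)) ^ 2)) :
    U 0 = 1 / 2 ∧ deriv U 0 = -(1 / (4 * c)) := by
  set correction : ℝ → ℝ := fun z =>
    1 / c ^ 2 * logisticDensity (z / c) * log (4 * logisticDensity (z / c))
  have hU_split : U = fun z => 1 / (1 + exp (z / c)) + correction z := by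
    funext z
    simp only [hU, correction, logisticDensity, mul_div_assoc]
  have h_even : correction.Even := fun z => by
    simp only [correction, neg_div, logisticDensity_even.eq]
  have h_diff : DifferentiableAt ℝ correction 0 := by
    have h_arg : DifferentiableAt ℝ (fun z => logisticDensity (z / c)) 0 :=
      differentiable_logisticDensity.comp (differentiable_id.div_const c) 0
    exact (h_arg.const_mul _).mul
      ((h_arg.const_mul 4).log (mul_pos four_pos (logisticDensity_pos _)).ne')
  have h_lead : HasDerivAt (fun z => 1 / (1 + exp (z / c)))
      (-logisticDensity (0 / c) * (1 / c)) 0 :=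
    HasDerivAt.comp (h := fun z : ℝ => z / c) 0
      (hasDerivAt_one_div_one_add_exp (0 / c)) ((hasDerivAt_id 0).div_const c)
  refine ⟨by norm_num [hU], ?_⟩
  have h_corr : HasDerivAt correction 0 0 := by
    simpa only [h_even.deriv_zero] using h_diff.hasDerivAt
  rw [hU_split]
  exact (h_lead.add h_corr).deriv.trans (by rw [zero_div, logisticDensity_zero]; ring)

/-- For the two-term asymptotic Fisher travelling-wave profile
`U_c(z) = 1/(1+e^{z/c}) + (1/c²)·e^{z/c}/(1+e^{z/c})²·log(4e^{z/c}/(1+e^{z/c})²)`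
one has `U_c(0) = 1/2` and `U_c'(0) = −1/(4c)` exactly: the slope at the inflection point
is related to the wave speed by `U'(0) = −1/(4c)`. -/
theorem stmt_8 (c : ℝ) (hc : 0 < c) (U : ℝ → ℝ)
    (hU : ∀ z : ℝ, U z =
      1 / (1 + Real.exp (z / c)) +
        (1 / c ^ 2) * (Real.exp (z / c) / (1 + Real.exp (z / c)) ^ 2) *
          Real.log (4 * Real.exp (z / c) / (1 + Real.exp (z / c)) ^ 2)) :
    U 0 = 1 / 2 ∧ deriv U 0 = -(1 / (4 * c)) :=
  stmt_8_general c U hU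
end

section
/- Let k > 0, D > 0 and let 0 < c < 2√(kD). Then there is no twice continuously differentiable function U : ℝ → ℝ with 0 ≤ U(z) ≤ 1 for all z ∈ ℝ, lim_{z→−∞} U(z) = 1, lim_{z→+∞} U(z) = 0, satisfying D U''(z) + c U'(z) + k U(z)(1 − U(z)) = 0 for all z ∈ ℝ. That is, the Fisher–Kolmogoroff equation admits no travelling front with values in [0,1] of speed below the minimal speed 2√(kD). -/
/-!
Below the minimal speed, `b = c / (2D)` satisfies `b² < k / D`, so for small `ε > 0` the damped
oscillator `V'' + 2bV' + (b² + ω²)V = 0` with `b² + ω² = k(1 - ε) / D` has solutions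
`e^{-bz} sin (ω (z - z₀))` vanishing at `z₀` and at `z₀ + π / ω`. Wherever `0 ≤ U ≤ ε`, the front
is a supersolution of this oscillator, and Sturm comparison forces it to vanish at the left end
of every such half-period. Since `U → 0` at `+∞`, `U` vanishes on a half-line, and the set where
it vanishes to the right is clopen, so `U ≡ 0`, contradicting `U(-∞) = 1`.
-/

open Real Filter Set Topology

theorem le_zero_of_harmonic_supersolution {V V' V'' : ℝ → ℝ} {ω z₀ : ℝ} (hω : 0 < ω)
    (hV : ∀ z, HasDerivAt V (V' z) z) (hV' : ∀ z, HasDerivAt V' (V'' z) z)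
    (hsuper : ∀ z ∈ Ioo z₀ (z₀ + π / ω), V'' z + ω ^ 2 * V z ≤ 0)
    (hend : 0 ≤ V (z₀ + π / ω)) : V z₀ ≤ 0 := by
  set z₁ := z₀ + π / ω
  have hphase : ∀ z, HasDerivAt (fun z => ω * (z - z₀)) ω z := fun z => by
    simpa using ((hasDerivAt_id z).sub_const z₀).const_mul ω
  have hsin : ∀ z, HasDerivAt (fun z => sin (ω * (z - z₀))) (ω * cos (ω * (z - z₀))) z :=
    fun z => by simpa [mul_comm] using (hphase z).sin
  have hcos : ∀ z, HasDerivAt (fun z => ω * cos (ω * (z - z₀)))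
      (-ω ^ 2 * sin (ω * (z - z₀))) z := fun z =>
    (((hphase z).cos).const_mul ω).congr_deriv (by ring)
  -- `W` is the Wronskian of `V` and the half-period solution `sin (ω (z - z₀))`.
  set W : ℝ → ℝ := fun z => V' z * sin (ω * (z - z₀)) - V z * (ω * cos (ω * (z - z₀)))
  have hW : ∀ z, HasDerivAt W (sin (ω * (z - z₀)) * (V'' z + ω ^ 2 * V z)) z := fun z =>
    (((hV' z).mul (hsin z)).sub ((hV z).mul (hcos z))).congr_deriv (by ring)
  have hanti : AntitoneOn W (Icc z₀ z₁) := by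
    refine antitoneOn_of_hasDerivWithinAt_nonpos (convex_Icc z₀ z₁)
      (fun z _ => (hW z).continuousAt.continuousWithinAt) (fun z _ => (hW z).hasDerivWithinAt)
      fun z hz => ?_
    rw [interior_Icc] at hz
    have hphase_mem : ω * (z - z₀) ≤ π := by
      have := mul_le_mul_of_nonneg_left (sub_le_sub_right hz.2.le z₀) hω.le
      rwa [show z₁ - z₀ = π / ω by ring, mul_div_cancel₀ _ hω.ne'] at this
    exact mul_nonpos_of_nonneg_of_nonpos
      (sin_nonneg_of_nonneg_of_le_pi (mul_nonneg hω.le (sub_nonneg.2 hz.1.le)) hphase_mem)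
      (hsuper z hz)
  have hz₀₁ : z₀ ≤ z₁ := le_add_of_nonneg_right (div_pos pi_pos hω).le
  have hWz₀ : W z₀ = -(ω * V z₀) := by simp [W]; ring
  have hWz₁ : W z₁ = ω * V z₁ := by
    simp only [W, z₁, add_sub_cancel_left, mul_div_cancel₀ _ hω.ne', sin_pi, cos_pi]; ring
  have := hanti ⟨le_rfl, hz₀₁⟩ ⟨hz₀₁, le_rfl⟩ hz₀₁
  nlinarith

theorem le_zero_of_damped_supersolution {U U' U'' : ℝ → ℝ} {b ω z₀ : ℝ} (hω : 0 < ω)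
    (hU : ∀ z, HasDerivAt U (U' z) z) (hU' : ∀ z, HasDerivAt U' (U'' z) z)
    (hsuper : ∀ z ∈ Ioo z₀ (z₀ + π / ω), U'' z + 2 * b * U' z + (b ^ 2 + ω ^ 2) * U z ≤ 0)
    (hend : 0 ≤ U (z₀ + π / ω)) : U z₀ ≤ 0 := by
  have hexp : ∀ z, HasDerivAt (fun z => exp (b * z)) (b * exp (b * z)) z := fun z => by
    simpa [mul_comm] using ((hasDerivAt_id z).const_mul b).exp
  -- The substitution `U = e^{-bz} V` removes the damping term.
  have key : exp (b * z₀) * U z₀ ≤ 0 := by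
    refine le_zero_of_harmonic_supersolution (V := fun z => exp (b * z) * U z)
      (V' := fun z => exp (b * z) * (U' z + b * U z))
      (V'' := fun z => exp (b * z) * (U'' z + 2 * b * U' z + b ^ 2 * U z)) hω
      (fun z => ((hexp z).mul (hU z)).congr_deriv (by ring))
      (fun z => ((hexp z).mul ((hU' z).fun_add ((hU z).const_mul b))).congr_deriv (by ring))
      (fun z hz => ?_) (mul_nonneg (exp_pos _).le hend)
    have := mul_nonpos_of_nonneg_of_nonpos (exp_pos (b * z)).le (hsuper z hz)
    linarith
  exact nonpos_of_mul_nonpos_right key (exp_pos _)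

theorem eq_zero_of_tendsto_zero_of_small_on_Icc {U : ℝ → ℝ} {ε L : ℝ} (hU : Continuous U)
    (hε : 0 < ε) (htop : Tendsto U atTop (𝓝 0))
    (hloc : ∀ z₀, (∀ z ∈ Icc z₀ (z₀ + L), U z ≤ ε) → U z₀ = 0) : U = 0 := by
  set T : Set ℝ := {z | ∀ t, z < t → U t = 0}
  have hT_closed : IsClosed T := by
    refine isOpen_compl_iff.1 (isOpen_iff_forall_mem_open.2 fun z hz => ?_)
    obtain ⟨t, hzt, ht⟩ : ∃ t, z < t ∧ U t ≠ 0 := by simpa [T] using hz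
    exact ⟨Iio t, fun y hy hyT => ht (hyT t hy), isOpen_Iio, hzt⟩
  have hT_open : IsOpen T := by
    refine isOpen_iff_mem_nhds.2 fun z hz => ?_
    have hUz : U z = 0 := (isClosed_eq hU continuous_const).closure_subset_iff.2 hz
      (closure_Ioi z ▸ self_mem_Ici)
    obtain ⟨δ, hδ, hsmall⟩ := Metric.eventually_nhds_iff.1
      ((hUz ▸ hU.continuousAt : Tendsto U (𝓝 z) (𝓝 0)).eventually_lt_const hε)
    refine mem_of_superset (Ioi_mem_nhds (sub_lt_self z hδ)) fun y hy t hyt => hloc t fun u hu => ?_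
    rcases lt_or_ge z u with hzu | huz
    · exact (hz u hzu).le.trans hε.le
    · refine (hsmall ?_).le
      rw [Real.dist_eq, abs_lt]
      constructor <;> linarith [hy.out, hu.1]
  have hT_nonempty : T.Nonempty := by
    obtain ⟨Z, hZ⟩ := (htop.eventually_lt_const hε).exists_forall_of_atTop
    exact ⟨Z, fun t hZt => hloc t fun u hu => (hZ u (hZt.le.trans hu.1)).le⟩
  have hT_univ := IsClopen.eq_univ ⟨hT_closed, hT_open⟩ hT_nonempty
  funext z
  exact (hT_univ ▸ mem_univ (z - 1) : z - 1 ∈ T) z (sub_one_lt z)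

theorem fisher_exists_eq_zero_of_small_on_Icc {k D c : ℝ} {U : ℝ → ℝ} (hk : 0 < k) (hD : 0 < D)
    (hc : c ^ 2 < 4 * k * D) (hU : ContDiff ℝ 2 U) (hU_nonneg : ∀ z, 0 ≤ U z)
    (hODE : ∀ z, D * deriv (deriv U) z + c * deriv U z + k * U z * (1 - U z) = 0) :
    ∃ ε > 0, ∃ L, ∀ z₀, (∀ z ∈ Icc z₀ (z₀ + L), U z ≤ ε) → U z₀ = 0 := by
  have hdisc : 0 < 4 * k * D - c ^ 2 := sub_pos.2 hc
  set ε := (4 * k * D - c ^ 2) / (8 * k * D)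
  set b := c / (2 * D)
  set ω := √((4 * k * D - c ^ 2) / (8 * D ^ 2))
  have hω : 0 < ω := sqrt_pos.2 (by positivity)
  have hfreq : b ^ 2 + ω ^ 2 = k * (1 - ε) / D := by
    rw [sq_sqrt (by positivity)]; simp only [ε, b]; field_simp; ring
  obtain ⟨hU₁, hU₂⟩ : Differentiable ℝ U ∧ Differentiable ℝ (deriv U) :=
    ⟨hU.differentiable two_ne_zero, (hU.iterate_deriv' 1 1).differentiable one_ne_zero⟩
  refine ⟨ε, by positivity, π / ω, fun z₀ hsmall => le_antisymm ?_ (hU_nonneg z₀)⟩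
  refine le_zero_of_damped_supersolution (b := b) hω (fun z => (hU₁ z).hasDerivAt)
    (fun z => (hU₂ z).hasDerivAt) (fun z hz => ?_) (hU_nonneg _)
  have hUz := hsmall z (Ioo_subset_Icc_self hz)
  have hlin : D * (deriv (deriv U) z + 2 * b * deriv U z + (b ^ 2 + ω ^ 2) * U z)
      = k * U z * (U z - ε) := by
    rw [hfreq]; simp only [b]; field_simp; linear_combination hODE z
  have : k * U z * (U z - ε) ≤ 0 :=
    mul_nonpos_of_nonneg_of_nonpos (mul_nonneg hk.le (hU_nonneg z)) (sub_nonpos.2 hUz)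
  exact nonpos_of_mul_nonpos_right (hlin ▸ this) hD

/-- For `k, D > 0` and any speed `0 < c < 2√(kD)`, the Fisher–Kolmogoroff equation admits no
travelling front with values in `[0,1]`: there is no `C²` profile `U` with `0 ≤ U ≤ 1`,
`U(−∞) = 1`, `U(+∞) = 0`, solving `D U'' + c U' + k U(1−U) = 0`. -/
theorem stmt_11 (k D c : ℝ) (hk : 0 < k) (hD : 0 < D)
    (hc0 : 0 < c) (hc : c < 2 * Real.sqrt (k * D)) :
    ¬ ∃ U : ℝ → ℝ, ContDiff ℝ 2 U ∧
      (∀ z : ℝ, 0 ≤ U z ∧ U z ≤ 1) ∧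
      Filter.Tendsto U Filter.atBot (nhds 1) ∧
      Filter.Tendsto U Filter.atTop (nhds 0) ∧
      ∀ z : ℝ, D * deriv (deriv U) z + c * deriv U z + k * U z * (1 - U z) = 0 := by
  rintro ⟨U, hU, hU01, hbot, htop, hODE⟩
  have hc2 : c ^ 2 < 4 * k * D := by
    have := pow_lt_pow_left₀ hc hc0.le two_ne_zero
    rwa [mul_pow, sq_sqrt (mul_pos hk hD).le, ← mul_assoc, show (2 : ℝ) ^ 2 = 4 by norm_num] at this
  obtain ⟨ε, hε, L, hloc⟩ :=
    fisher_exists_eq_zero_of_small_on_Icc hk hD hc2 hU (fun z => (hU01 z).1) hODE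
  obtain rfl := eq_zero_of_tendsto_zero_of_small_on_Icc hU.continuous hε htop hloc
  exact zero_ne_one (tendsto_nhds_unique tendsto_const_nhds hbot)
end

section
/- Define U : ℝ → ℝ by U(z) = 1 − e^{z/√2}. Then for every z ∈ ℝ the identity U(z)·U''(z) + (U'(z))² + (1/√2)·U'(z) + U(z)(1 − U(z)) = 0 holds; equivalently, (U U')'(z) + (1/√2) U'(z) + U(z)(1 − U(z)) = 0. That is, U is an exact travelling-wave profile of speed c = 1/√2 for the porous-Fisher equation with p = q = m = 1. -/
open Real

lemma hasDerivAt_exp_div (s z : ℝ) : HasDerivAt (fun z => exp (z / s)) (exp (z / s) / s) z := by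
  simpa [div_eq_mul_inv, mul_comm] using ((hasDerivAt_id z).div_const s).exp

lemma deriv_one_sub_exp_div (s : ℝ) :
    deriv (fun z => 1 - exp (z / s)) = fun z => -(exp (z / s) / s) :=
  funext fun z => ((hasDerivAt_exp_div s z).const_sub 1).deriv

lemma deriv_deriv_one_sub_exp_div (s : ℝ) :
    deriv (deriv fun z => 1 - exp (z / s)) = fun z => -(exp (z / s) / s / s) := by
  rw [deriv_one_sub_exp_div]
  exact funext fun z => ((hasDerivAt_exp_div s z).div_const s).neg.deriv

lemma deriv_mul_deriv {𝕜 : Type*} [NontriviallyNormedField 𝕜] {f : 𝕜 → 𝕜} {z : 𝕜}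
    (hf : DifferentiableAt 𝕜 f z) (hf' : DifferentiableAt 𝕜 (deriv f) z) :
    deriv (fun y => f y * deriv f y) z = deriv f z ^ 2 + f z * deriv (deriv f) z := by
  rw [deriv_fun_mul hf hf']
  ring

/-- For the profile `1 - e` with `e = exp (a z)` and speed `c`, the left-hand side is
`e · ((1 - a² - c a) + (2a² - 1) e)`; both brackets vanish exactly at `a = c = 1/√2`. -/
lemma one_sub_exp_div_sqrt_two_travelling_wave (z : ℝ) :
    (1 - exp (z / √2)) * deriv (deriv fun z => 1 - exp (z / √2)) z
      + deriv (fun z => 1 - exp (z / √2)) z ^ 2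
      + 1 / √2 * deriv (fun z => 1 - exp (z / √2)) z
      + (1 - exp (z / √2)) * (1 - (1 - exp (z / √2))) = 0 := by
  have hs : √2 ≠ 0 := by positivity
  have hs2 : √2 ^ 2 = 2 := sq_sqrt zero_le_two
  rw [deriv_deriv_one_sub_exp_div, deriv_one_sub_exp_div]
  field_simp
  linear_combination (exp (z / √2) - exp (z / √2) ^ 2) * hs2

/-- `U(z) = 1 − e^{z/√2}` satisfies `U U'' + (U')² + (1/√2)U' + U(1−U) = 0`, equivalently
`(U U')' + (1/√2)U' + U(1−U) = 0`: it is an exact travelling-wave profile of speed `1/√2`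
for the porous-Fisher equation with `p = q = m = 1`. -/
theorem stmt_12 (U : ℝ → ℝ)
    (hU : ∀ z : ℝ, U z = 1 - Real.exp (z / Real.sqrt 2)) :
    ∀ z : ℝ,
      U z * deriv (deriv U) z + (deriv U z) ^ 2 + (1 / Real.sqrt 2) * deriv U z +
          U z * (1 - U z) = 0 ∧
      deriv (fun y => U y * deriv U y) z + (1 / Real.sqrt 2) * deriv U z +
          U z * (1 - U z) = 0 := by
  obtain rfl : U = fun z => 1 - exp (z / √2) := funext hU
  intro z
  have hode := one_sub_exp_div_sqrt_two_travelling_wave z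
  have hdiff : DifferentiableAt ℝ (fun z => 1 - exp (z / √2)) z := by fun_prop
  have hdiff' : DifferentiableAt ℝ (deriv fun z => 1 - exp (z / √2)) z := by
    rw [deriv_one_sub_exp_div]
    fun_prop
  refine ⟨hode, ?_⟩
  rw [deriv_mul_deriv hdiff hdiff']
  linear_combination hode
end
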